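/- arXiv:2310.08057 — 9 statements merged into one kernel-verified Lean document; each statement's English description precedes it below -/
import Mathlib

section
/- Let A be the n×n adjacency matrix of a signed graph G, and for l = 1,…,n let B_l be the t_l×t_l adjacency matrix of a signed graph H_l with marking vector v_l ∈ {±1}^{t_l}. Let P = diag(μ(1),…,μ(n)) with μ(i) ∈ {±1}, let Q be the n×(Σt_l) block-diagonal matrix with l-th diagonal block v_lᵀ, and let D be the block-diagonal matrix with blocks B_1,…,B_n. Then the characteristic polynomial of the block matrix M = [[A, PQ],[(PQ)ᵀ, D]] satisfies det(λI − M) = (∏_{l=1}^n det(λI − B_l)) · det(Λ − A), where Λ = diag(λ − χ_1(λ),…, λ − χ_n(λ)) and χ_l(λ) = v_lᵀ(λI − B_l)⁻¹v_l, for all λ making each λI − B_l invertible. -/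
open Matrix BigOperators

lemma det_blockDiagonal'_aux {n : ℕ} {t : Fin n → ℕ}
    (M : ∀ l, Matrix (Fin (t l)) (Fin (t l)) ℝ) :
    (Matrix.blockDiagonal' M).det = ∏ l, (M l).det := by
  classical
  have hbt : (Matrix.blockDiagonal' M).BlockTriangular Sigma.fst := by
    intro p q h
    rw [Matrix.blockDiagonal'_apply, dif_neg]
    exact fun e => absurd e (ne_of_gt h)
  rw [hbt.det_fintype]
  refine Finset.prod_congr rfl fun k _ => ?_
  let e : {p : (Σ l, Fin (t l)) // p.1 = k} ≃ Fin (t k) :=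
  { toFun := fun p => Fin.cast (congrArg t p.2) p.1.2
    invFun := fun a => ⟨⟨k, a⟩, rfl⟩
    left_inv := by rintro ⟨⟨l, a⟩, rfl⟩; rfl
    right_inv := fun a => rfl }
  have h2 : (Matrix.blockDiagonal' M).toSquareBlock Sigma.fst k = ((M k).submatrix e e) := by
    ext p q
    obtain ⟨⟨l, a⟩, hp⟩ := p
    obtain ⟨⟨m, b⟩, hq⟩ := q
    dsimp only at hp hq
    subst hp; subst hq
    simp [Matrix.toSquareBlock_def, Matrix.blockDiagonal'_apply, e]
  rw [h2, Matrix.det_submatrix_equiv_self]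

/-- Characteristic polynomial factorization for the generalized corona product of
signed graphs, via the signed coronals `χ_l(λ) = v_lᵀ (λI - B_l)⁻¹ v_l`. -/
theorem corona_charpoly {n : ℕ} (t : Fin n → ℕ) (A : Matrix (Fin n) (Fin n) ℝ)
    (B : ∀ l, Matrix (Fin (t l)) (Fin (t l)) ℝ)
    (v : ∀ l, Fin (t l) → ℝ) (μ : Fin n → ℝ)
    (hA : A.IsSymm) (hB : ∀ l, (B l).IsSymm)
    (hμ : ∀ i, μ i = 1 ∨ μ i = -1) (hv : ∀ l j, v l j = 1 ∨ v l j = -1)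
    (lam : ℝ)
    (hinv : ∀ l, IsUnit (lam • (1 : Matrix (Fin (t l)) (Fin (t l)) ℝ) - B l).det) :
    (lam • (1 : Matrix (Fin n ⊕ (Σ l, Fin (t l))) (Fin n ⊕ (Σ l, Fin (t l))) ℝ) -
      Matrix.fromBlocks A
        (Matrix.of fun i (p : Σ l, Fin (t l)) => if i = p.1 then μ i * v p.1 p.2 else 0)
        (Matrix.of fun (p : Σ l, Fin (t l)) i => if i = p.1 then μ i * v p.1 p.2 else 0)
        (Matrix.blockDiagonal' B)).det
    = (∏ l, (lam • (1 : Matrix (Fin (t l)) (Fin (t l)) ℝ) - B l).det) *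
      (Matrix.diagonal (fun l =>
          lam - v l ⬝ᵥ ((lam • (1 : Matrix (Fin (t l)) (Fin (t l)) ℝ) - B l)⁻¹ *ᵥ v l))
        - A).det := by
  classical
  set C : Matrix (Fin n) (Σ l, Fin (t l)) ℝ :=
    Matrix.of fun i (p : Σ l, Fin (t l)) => if i = p.1 then μ i * v p.1 p.2 else 0 with hC
  set Ct : Matrix (Σ l, Fin (t l)) (Fin n) ℝ :=
    Matrix.of fun (p : Σ l, Fin (t l)) i => if i = p.1 then μ i * v p.1 p.2 else 0 with hCt
  set M : ∀ l, Matrix (Fin (t l)) (Fin (t l)) ℝ := fun l => lam • 1 - B l with hM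
  have hμ2 : ∀ i, μ i * μ i = 1 := fun i => by rcases hμ i with h | h <;> rw [h] <;> norm_num
  -- the big bottom-right block is block-diagonal of the M l
  have hDeq : lam • (1 : Matrix (Σ l, Fin (t l)) (Σ l, Fin (t l)) ℝ) - blockDiagonal' B
      = blockDiagonal' M := by
    show _ = blockDiagonal' (lam • 1 - B)
    rw [blockDiagonal'_sub, blockDiagonal'_smul]
    congr 1
    exact (congrArg (lam • ·) blockDiagonal'_one).symm
  -- right inverse of the block diagonal
  have hmul : blockDiagonal' M * blockDiagonal' (fun l => (M l)⁻¹) = 1 := by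
    rw [← blockDiagonal'_mul]
    have h1 : (fun l => M l * (M l)⁻¹) = fun l => (1 : Matrix (Fin (t l)) (Fin (t l)) ℝ) := by
      funext l
      exact Matrix.mul_nonsing_inv _ (hinv l)
    rw [h1]
    exact blockDiagonal'_one
  haveI : Invertible (blockDiagonal' M) := invertibleOfRightInverse _ _ hmul
  have hInvOf : ⅟ (blockDiagonal' M) = blockDiagonal' (fun l => (M l)⁻¹) :=
    invOf_eq_right_inv hmul
  -- decompose λI - big matrix as fromBlocks
  have hsplit : lam • (1 : Matrix (Fin n ⊕ (Σ l, Fin (t l))) (Fin n ⊕ (Σ l, Fin (t l))) ℝ) -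
      Matrix.fromBlocks A C Ct (Matrix.blockDiagonal' B)
      = Matrix.fromBlocks (lam • 1 - A) (-C) (-Ct) (blockDiagonal' M) := by
    rw [← hDeq, ← fromBlocks_one, fromBlocks_smul, sub_eq_add_neg, fromBlocks_neg,
      fromBlocks_add]
    simp [sub_eq_add_neg]
  -- first multiply: rows of C against the block-diagonal inverse
  have h1 : ∀ (i l : Fin n) (k : Fin (t l)),
      (C * blockDiagonal' (fun l => (M l)⁻¹)) i ⟨l, k⟩
      = if i = l then μ i * (v l ᵥ* (M l)⁻¹) k else 0 := by
    intro i l k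
    rw [Matrix.mul_apply, ← Finset.univ_sigma_univ, Finset.sum_sigma]
    rw [Finset.sum_eq_single i]
    · rcases eq_or_ne i l with rfl | h
      · simp [hC, blockDiagonal'_apply, Matrix.vecMul, dotProduct, Finset.mul_sum,
          mul_assoc]
      · simp [hC, blockDiagonal'_apply, h]
    · intro b _ hb
      simp [hC, Ne.symm hb]
    · simp
  -- the Schur complement correction is diagonal
  have hcorr : C * blockDiagonal' (fun l => (M l)⁻¹) * Ct
      = Matrix.diagonal (fun l => v l ⬝ᵥ ((M l)⁻¹ *ᵥ v l)) := by
    ext i j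
    rw [Matrix.mul_apply, ← Finset.univ_sigma_univ, Finset.sum_sigma]
    simp only [h1, hCt, Matrix.of_apply]
    rcases eq_or_ne i j with rfl | h
    · rw [Finset.sum_eq_single i]
      · simp only [if_pos rfl, Matrix.diagonal_apply_eq]
        rw [Matrix.dotProduct_mulVec, dotProduct]
        calc (∑ k, (μ i * (v i ᵥ* (M i)⁻¹) k) * (μ i * v i k))
            = ∑ k, (μ i * μ i) * ((v i ᵥ* (M i)⁻¹) k * v i k) := by
              refine Finset.sum_congr rfl fun k _ => by ring
          _ = ∑ k, (v i ᵥ* (M i)⁻¹) k * v i k := by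
              simp [hμ2 i]
      · intro b _ hb
        refine Finset.sum_eq_zero fun k _ => ?_
        simp [Ne.symm hb]
      · simp
    · rw [Matrix.diagonal_apply_ne _ h]
      refine Finset.sum_eq_zero fun l _ => Finset.sum_eq_zero fun k _ => ?_
      rcases eq_or_ne i l with rfl | hil
      · simp [Ne.symm h]
      · simp [hil]
  rw [hsplit, Matrix.det_fromBlocks₂₂, hInvOf]
  congr 1
  · exact det_blockDiagonal'_aux M
  · simp only [Matrix.neg_mul, Matrix.mul_neg, neg_neg]
    rw [hcorr]
    congr 1
    rw [Matrix.smul_one_eq_diagonal, sub_right_comm, Matrix.diagonal_sub]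
end

section
/- With the setup of the generalized corona adjacency matrix M = [[A, PQ],[(PQ)ᵀ, D]], if all the signed coronals χ_{H_1}(λ) = … = χ_{H_n}(λ) = χ(λ) are equal, then det(λI − M) = (∏_{l=1}^n det(λI − B_l)) · det((λ − χ(λ))I − A) = (∏_{l=1}^n f_{H_l}(λ)) · f_G(λ − χ(λ)). -/
open Matrix BigOperators

theorem fromBlocks_sub' {l m α : Type*} [Sub α]
    (A A' : Matrix l l α) (B B' : Matrix l m α) (C C' : Matrix m l α) (D D' : Matrix m m α) :
    Matrix.fromBlocks A B C D - Matrix.fromBlocks A' B' C' D' =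
      Matrix.fromBlocks (A - A') (B - B') (C - C') (D - D') := by
  ext (i | i) (j | j) <;> rfl

/-- Equiv peeling off the first block of a sigma type over `Fin (n+1)`. -/
def sigmaFinSuccEquivSum {n : ℕ} (t : Fin (n + 1) → ℕ) :
    (Σ l : Fin (n + 1), Fin (t l)) ≃ (Fin (t 0) ⊕ Σ l : Fin n, Fin (t l.succ)) where
  toFun p := Fin.cases (motive := fun l => Fin (t l) → (Fin (t 0) ⊕ Σ l : Fin n, Fin (t l.succ)))
    (fun j => Sum.inl j) (fun l j => Sum.inr ⟨l, j⟩) p.1 p.2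
  invFun q := Sum.elim (fun j => ⟨0, j⟩) (fun q => ⟨q.1.succ, q.2⟩) q
  left_inv := by
    rintro ⟨l, j⟩
    induction l using Fin.cases <;> simp
  right_inv := by rintro (j | ⟨l, j⟩) <;> simp

theorem det_blockDiagonal'_fin {n : ℕ} (t : Fin n → ℕ)
    (M : ∀ l, Matrix (Fin (t l)) (Fin (t l)) ℝ) :
    (Matrix.blockDiagonal' M).det = ∏ l, (M l).det := by
  induction n with
  | zero => simp [Matrix.det_isEmpty]
  | succ n ih =>
    rw [← Matrix.det_submatrix_equiv_self (sigmaFinSuccEquivSum t).symm (Matrix.blockDiagonal' M)]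
    have hsub : (Matrix.blockDiagonal' M).submatrix (sigmaFinSuccEquivSum t).symm
        (sigmaFinSuccEquivSum t).symm =
        Matrix.fromBlocks (M 0) 0 0 (Matrix.blockDiagonal' fun l : Fin n => M l.succ) := by
      ext (i | ⟨k, i⟩) (j | ⟨k', j⟩)
      · show Matrix.blockDiagonal' M ⟨0, i⟩ ⟨0, j⟩ = M 0 i j
        exact Matrix.blockDiagonal'_apply_eq M 0 i j
      · show Matrix.blockDiagonal' M ⟨0, i⟩ ⟨k'.succ, j⟩ = 0
        exact Matrix.blockDiagonal'_apply_ne M i j (Fin.succ_ne_zero k').symm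
      · show Matrix.blockDiagonal' M ⟨k.succ, i⟩ ⟨0, j⟩ = 0
        exact Matrix.blockDiagonal'_apply_ne M i j (Fin.succ_ne_zero k)
      · show Matrix.blockDiagonal' M ⟨k.succ, i⟩ ⟨k'.succ, j⟩ =
          Matrix.blockDiagonal' (fun l : Fin n => M l.succ) ⟨k, i⟩ ⟨k', j⟩
        by_cases h : k = k'
        · subst h
          rw [Matrix.blockDiagonal'_apply_eq, Matrix.blockDiagonal'_apply_eq]
        · rw [Matrix.blockDiagonal'_apply_ne _ _ _ (fun hh => h (Fin.succ_injective _ hh)),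
            Matrix.blockDiagonal'_apply_ne _ _ _ h]
    rw [hsub, Matrix.det_fromBlocks_zero₁₂, ih, Fin.prod_univ_succ]

/-- If all signed coronals of the `H_l` at `λ` are equal to `c`, the
characteristic polynomial of the generalized corona product factors as
`(∏ f_{H_l}(λ)) · f_G(λ - c)`. -/
theorem corona_charpoly_equal_coronals {n : ℕ} (t : Fin n → ℕ)
    (A : Matrix (Fin n) (Fin n) ℝ)
    (B : ∀ l, Matrix (Fin (t l)) (Fin (t l)) ℝ)
    (v : ∀ l, Fin (t l) → ℝ) (μ : Fin n → ℝ)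
    (hA : A.IsSymm) (hB : ∀ l, (B l).IsSymm)
    (hμ : ∀ i, μ i = 1 ∨ μ i = -1) (hv : ∀ l j, v l j = 1 ∨ v l j = -1)
    (lam c : ℝ)
    (hinv : ∀ l, IsUnit (lam • (1 : Matrix (Fin (t l)) (Fin (t l)) ℝ) - B l).det)
    (hχ : ∀ l, v l ⬝ᵥ ((lam • (1 : Matrix (Fin (t l)) (Fin (t l)) ℝ) - B l)⁻¹ *ᵥ v l) = c) :
    (lam • (1 : Matrix (Fin n ⊕ (Σ l, Fin (t l))) (Fin n ⊕ (Σ l, Fin (t l))) ℝ) -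
      Matrix.fromBlocks A
        (Matrix.of fun i (p : Σ l, Fin (t l)) => if i = p.1 then μ i * v p.1 p.2 else 0)
        (Matrix.of fun (p : Σ l, Fin (t l)) i => if i = p.1 then μ i * v p.1 p.2 else 0)
        (Matrix.blockDiagonal' B)).det
    = (∏ l, (lam • (1 : Matrix (Fin (t l)) (Fin (t l)) ℝ) - B l).det) *
      ((lam - c) • (1 : Matrix (Fin n) (Fin n) ℝ) - A).det := by
  set C : Matrix (Fin n) (Σ l, Fin (t l)) ℝ :=
    Matrix.of fun i (p : Σ l, Fin (t l)) => if i = p.1 then μ i * v p.1 p.2 else 0 with hC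
  have hCt : (Matrix.of fun (p : Σ l, Fin (t l)) i => if i = p.1 then μ i * v p.1 p.2 else 0)
      = Cᵀ := by ext p i; rfl
  set S : ∀ l, Matrix (Fin (t l)) (Fin (t l)) ℝ :=
    fun l => lam • (1 : Matrix (Fin (t l)) (Fin (t l)) ℝ) - B l with hS
  set N : ∀ l, Matrix (Fin (t l)) (Fin (t l)) ℝ := fun l => (S l)⁻¹ with hN
  -- step 1 : rewrite the big matrix as a block matrix
  have hblock : (lam • (1 : Matrix (Fin n ⊕ (Σ l, Fin (t l))) (Fin n ⊕ (Σ l, Fin (t l))) ℝ) -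
      Matrix.fromBlocks A C Cᵀ (Matrix.blockDiagonal' B))
      = Matrix.fromBlocks (lam • 1 - A) (-C) (-Cᵀ) (Matrix.blockDiagonal' S) := by
    have hD : lam • (1 : Matrix (Σ l, Fin (t l)) (Σ l, Fin (t l)) ℝ) -
        Matrix.blockDiagonal' B = Matrix.blockDiagonal' S := by
      rw [← Matrix.blockDiagonal'_one, ← Matrix.blockDiagonal'_smul,
        ← Matrix.blockDiagonal'_sub]
      rfl
    rw [← Matrix.fromBlocks_one, Matrix.fromBlocks_smul, fromBlocks_sub', hD]
    simp only [smul_zero, zero_sub]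
  -- invertibility of the block diagonal part
  have hdetD : (Matrix.blockDiagonal' S).det = ∏ l, (S l).det := det_blockDiagonal'_fin t S
  have hU : IsUnit (Matrix.blockDiagonal' S).det := by
    rw [hdetD]
    exact Finset.prod_induction _ IsUnit (fun a b => IsUnit.mul) isUnit_one (fun l _ => hinv l)
  haveI : Invertible (Matrix.blockDiagonal' S) := Matrix.invertibleOfIsUnitDet _ hU
  have hinvD : ⅟ (Matrix.blockDiagonal' S) = Matrix.blockDiagonal' N := by
    rw [Matrix.invOf_eq_nonsing_inv]
    apply Matrix.inv_eq_right_inv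
    rw [← Matrix.blockDiagonal'_mul, ← Matrix.blockDiagonal'_one]
    exact congrArg Matrix.blockDiagonal'
      (funext fun l => Matrix.mul_nonsing_inv _ (hinv l))
  -- the Schur complement correction term
  have hKey : C * Matrix.blockDiagonal' N * Cᵀ = c • (1 : Matrix (Fin n) (Fin n) ℝ) := by
    have hK : ∀ (i : Fin n) (q : Σ l, Fin (t l)),
        (C * Matrix.blockDiagonal' N) i q =
          if i = q.1 then μ i * ∑ a, v q.1 a * N q.1 a q.2 else 0 := by
      rintro i ⟨l, b⟩
      rw [Matrix.mul_apply, ← Finset.univ_sigma_univ, Finset.sum_sigma]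
      by_cases h : i = l
      · subst h
        simp only [if_pos rfl]
        rw [Finset.sum_eq_single i]
        · rw [Finset.mul_sum]
          apply Finset.sum_congr rfl
          intro a _
          simp [hC, Matrix.blockDiagonal'_apply_eq, mul_assoc]
        · intro k _ hk
          apply Finset.sum_eq_zero
          intro a _
          simp [hC, (Ne.symm hk)]
        · intro h; exact absurd (Finset.mem_univ i) h
      · rw [if_neg h]
        apply Finset.sum_eq_zero
        intro k _
        apply Finset.sum_eq_zero
        intro a _
        by_cases hk : i = k
        · subst hk
          rw [Matrix.blockDiagonal'_apply_ne _ _ _ h, mul_zero]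
        · simp [hC, hk]
      -- done
    ext i j
    rw [Matrix.mul_apply, ← Finset.univ_sigma_univ, Finset.sum_sigma]
    by_cases h : j = i
    · subst h
      rw [Finset.sum_eq_single j]
      · have hμ2 : μ j * μ j = 1 := by rcases hμ j with h | h <;> rw [h] <;> norm_num
        have hc := hχ j
        rw [Matrix.dotProduct_mulVec] at hc
        have : ∑ b, (C * Matrix.blockDiagonal' N) j ⟨j, b⟩ * Cᵀ ⟨j, b⟩ j
            = μ j * μ j * ∑ b, (∑ a, v j a * N j a b) * v j b := by
          rw [Finset.mul_sum]
          apply Finset.sum_congr rfl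
          intro b _
          rw [hK]
          simp only [if_pos rfl]
          show μ j * (∑ a, v j a * N j a b) * (if j = j then μ j * v j b else 0) = _
          rw [if_pos rfl]
          ring
        rw [this, hμ2, one_mul]
        have hvd : ∑ b, (∑ a, v j a * N j a b) * v j b = (v j) ᵥ* (N j) ⬝ᵥ v j := by
          apply Finset.sum_congr rfl
          intro b _
          rfl
        rw [hvd, hc]
        simp
      · intro l _ hl
        apply Finset.sum_eq_zero
        intro b _
        rw [hK]
        rw [if_neg (Ne.symm hl), zero_mul]
      · intro h; exact absurd (Finset.mem_univ j) h
    · have : ∀ l, ∀ b : Fin (t l),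
          (C * Matrix.blockDiagonal' N) i ⟨l, b⟩ * Cᵀ ⟨l, b⟩ j = 0 := by
        intro l b
        by_cases hi : i = l
        · subst hi
          show _ * (if j = i then μ j * v i b else 0) = 0
          rw [if_neg h, mul_zero]
        · rw [hK, if_neg hi, zero_mul]
      rw [Finset.sum_eq_zero (fun l _ => Finset.sum_eq_zero (fun b _ => this l b))]
      simp [Matrix.one_apply, Ne.symm h]
  -- put everything together
  rw [hCt, hblock, Matrix.det_fromBlocks₂₂, hinvD, hdetD]
  congr 1
  rw [Matrix.neg_mul, Matrix.neg_mul, Matrix.mul_neg, neg_neg, hKey, sub_smul, sub_right_comm]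
end

section
/- Let G be a k-net-regular signed graph on n vertices whose constituent graphs H_1,…,H_n in a generalized corona product are all k-net-regular signed graphs of order m. Then the characteristic polynomial of the generalized corona product satisfies f_{G∘ΛH_l}(λ) = (∏_{l=1}^n f_{H_l}(λ)) · f_G(λ − m/(λ − k)) for all λ with λ ≠ k and λI − A(H_l) invertible. -/
open Matrix BigOperators

/-- Characteristic polynomial of the generalized corona product when `G` is
`k`-net-regular and each `H_l` is a `k`-net-regular signed graph of order `m`:
`f_{G∘ΛH_l}(λ) = (∏ f_{H_l}(λ)) · f_G(λ - m/(λ-k))`. -/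
theorem corona_charpoly_net_regular {n m : ℕ}
    (A : Matrix (Fin n) (Fin n) ℝ)
    (B : Fin n → Matrix (Fin m) (Fin m) ℝ)
    (v : Fin n → Fin m → ℝ) (μ : Fin n → ℝ) (k : ℝ)
    (hA : A.IsSymm) (hB : ∀ l, (B l).IsSymm)
    (hμ : ∀ i, μ i = 1 ∨ μ i = -1) (hv : ∀ l j, v l j = 1 ∨ v l j = -1)
    (hAreg : A *ᵥ μ = k • μ)
    (hBreg : ∀ l, B l *ᵥ v l = k • v l)
    (lam : ℝ) (hne : lam ≠ k)
    (hinv : ∀ l, IsUnit (lam • (1 : Matrix (Fin m) (Fin m) ℝ) - B l).det) :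
    (lam • (1 : Matrix (Fin n ⊕ (Fin m × Fin n)) (Fin n ⊕ (Fin m × Fin n)) ℝ) -
      Matrix.fromBlocks A
        (Matrix.of fun i (p : Fin m × Fin n) => if i = p.2 then μ i * v p.2 p.1 else 0)
        (Matrix.of fun (p : Fin m × Fin n) i => if i = p.2 then μ i * v p.2 p.1 else 0)
        (Matrix.blockDiagonal B)).det
    = (∏ l, (lam • (1 : Matrix (Fin m) (Fin m) ℝ) - B l).det) *
      ((lam - (m : ℝ) / (lam - k)) • (1 : Matrix (Fin n) (Fin n) ℝ) - A).det := by
  have hlk : lam - k ≠ 0 := sub_ne_zero.mpr hne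
  set Dm : Fin n → Matrix (Fin m) (Fin m) ℝ := fun l => lam • 1 - B l with hDm
  haveI : ∀ l, Invertible (Dm l) := fun l => (Dm l).invertibleOfIsUnitDet (hinv l)
  letI instBD : Invertible (blockDiagonal Dm) :=
    ⟨blockDiagonal (fun l => ⅟(Dm l)),
      by rw [← blockDiagonal_mul]; simp only [invOf_mul_self]; exact blockDiagonal_one,
      by rw [← blockDiagonal_mul]; simp only [mul_invOf_self]; exact blockDiagonal_one⟩
  -- v l is a (lam - k)-eigenvector of Dm l, hence of its inverse with value (lam-k)⁻¹
  have hDv : ∀ l, v l ᵥ* Dm l = (lam - k) • v l := by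
    intro l
    have hsym : (Dm l)ᵀ = Dm l := by
      simp [hDm, Matrix.transpose_sub, Matrix.transpose_smul, (hB l).eq]
    rw [← hsym, Matrix.vecMul_transpose]
    simp [hDm, Matrix.sub_mulVec, Matrix.smul_mulVec, hBreg l, sub_smul]
  have hIv : ∀ l, v l ᵥ* ⅟(Dm l) = (lam - k)⁻¹ • v l := by
    intro l
    have h1 : (v l ᵥ* Dm l) ᵥ* ⅟(Dm l) = v l := by
      rw [Matrix.vecMul_vecMul, mul_invOf_self, Matrix.vecMul_one]
    rw [hDv l, Matrix.smul_vecMul] at h1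
    have := congrArg (fun w => (lam - k)⁻¹ • w) h1
    simpa [smul_smul, inv_mul_cancel₀ hlk] using this
  set Pm : Matrix (Fin n) (Fin m × Fin n) ℝ :=
    Matrix.of fun i (p : Fin m × Fin n) => if i = p.2 then μ i * v p.2 p.1 else 0 with hPm
  set Qm : Matrix (Fin m × Fin n) (Fin n) ℝ :=
    Matrix.of fun (p : Fin m × Fin n) i => if i = p.2 then μ i * v p.2 p.1 else 0 with hQm
  have hblock : (lam • (1 : Matrix (Fin n ⊕ (Fin m × Fin n)) (Fin n ⊕ (Fin m × Fin n)) ℝ) -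
      Matrix.fromBlocks A Pm Qm (Matrix.blockDiagonal B)) =
      Matrix.fromBlocks (lam • 1 - A) (-Pm) (-Qm) (Matrix.blockDiagonal Dm) := by
    have h22 : lam • (1 : Matrix (Fin m × Fin n) (Fin m × Fin n) ℝ) -
        Matrix.blockDiagonal B = Matrix.blockDiagonal Dm := by
      ext p q
      by_cases hpq : p.2 = q.2 <;>
        simp [blockDiagonal_apply, Matrix.one_apply, hpq, Prod.ext_iff, hDm]
    rw [← fromBlocks_one, fromBlocks_smul, ← h22]
    ext i j
    rcases i with i | i <;> rcases j with j | j <;>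
      simp [Matrix.sub_apply]
  rw [hblock, det_fromBlocks₂₂, det_blockDiagonal]
  have hinvBD : ⅟(Matrix.blockDiagonal Dm) = Matrix.blockDiagonal (fun l => ⅟(Dm l)) := rfl
  -- the middle product
  have hPbd : ∀ i (q : Fin m × Fin n),
      (Pm * Matrix.blockDiagonal (fun l => ⅟(Dm l))) i q =
        if i = q.2 then μ i * ((lam - k)⁻¹ * v i q.1) else 0 := by
    intro i q
    obtain ⟨j', l'⟩ := q
    rw [Matrix.mul_apply, Fintype.sum_prod_type]
    simp only [hPm, Matrix.of_apply, Matrix.blockDiagonal_apply, ite_mul, zero_mul,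
      mul_ite, mul_zero]
    simp only [Finset.sum_ite_eq', Finset.mem_univ, if_true]
    by_cases h : i = l'
    · subst h
      simp only [eq_self_iff_true, if_true]
      have := congrFun (hIv i) j'
      simp only [Matrix.vecMul, dotProduct, Pi.smul_apply, smul_eq_mul] at this
      rw [← this, Finset.mul_sum]
      exact Finset.sum_congr rfl fun j _ => by ring
    · simp [h]
  have key : Pm * Matrix.blockDiagonal (fun l => ⅟(Dm l)) * Qm =
      ((m : ℝ) / (lam - k)) • (1 : Matrix (Fin n) (Fin n) ℝ) := by
    ext i i'
    rw [Matrix.mul_apply, Fintype.sum_prod_type]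
    simp only [hPbd, hQm, Matrix.of_apply, ite_mul, zero_mul, mul_ite, mul_zero,
      Matrix.smul_apply, Matrix.one_apply, smul_eq_mul]
    simp only [Finset.sum_ite_eq, Finset.mem_univ, if_true]
    by_cases h : i = i'
    · subst h
      simp only [eq_self_iff_true, if_true]
      have hμ2 : μ i * μ i = 1 := by rcases hμ i with h | h <;> rw [h] <;> norm_num
      have hsum : ∀ j : Fin m, μ i * ((lam - k)⁻¹ * v i j) * (μ i * v i j) = (lam - k)⁻¹ := by
        intro j
        have hv2 : v i j * v i j = 1 := by rcases hv i j with h | h <;> rw [h] <;> norm_num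
        calc μ i * ((lam - k)⁻¹ * v i j) * (μ i * v i j)
            = (μ i * μ i) * (v i j * v i j) * (lam - k)⁻¹ := by ring
          _ = (lam - k)⁻¹ := by rw [hμ2, hv2]; ring
      rw [Finset.sum_congr rfl fun j _ => hsum j]
      simp [div_eq_mul_inv, mul_comm]
    · have h' : ¬ i' = i := fun hh => h hh.symm
      simp [h, h']
  rw [hinvBD, Matrix.neg_mul, Matrix.mul_neg, Matrix.neg_mul, neg_neg, key]
  congr 1
  rw [sub_smul, sub_right_comm]
end

section
/- Let A₁ and A₂ be n×n symmetric matrices with the same characteristic polynomial (cospectral signed graphs G', G''), and let H_1,…,H_n be signed graphs all with equal signed coronals χ. Then the generalized corona products G'∘ΛH_l and G''∘ΛH_l have the same characteristic polynomial. -/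
open Matrix BigOperators

lemma key_prod {n m : ℕ} (μ : Fin n → ℝ) (v : Fin n → Fin m → ℝ)
    (E : Fin n → Matrix (Fin m) (Fin m) ℝ) :
    (Matrix.of fun i (p : Fin m × Fin n) => if i = p.2 then μ i * v p.2 p.1 else 0) *
      Matrix.blockDiagonal E *
      (Matrix.of fun (p : Fin m × Fin n) i => if i = p.2 then μ i * v p.2 p.1 else 0)
    = Matrix.diagonal (fun i => μ i * μ i * (v i ⬝ᵥ (E i *ᵥ v i))) := by
  ext i i'
  simp only [mul_apply, Matrix.of_apply, Matrix.blockDiagonal_apply, Fintype.sum_prod_type,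
    diagonal_apply, dotProduct, mulVec, Finset.mul_sum, Finset.sum_mul]
  simp only [ite_mul, mul_ite, zero_mul, mul_zero, Finset.sum_ite_eq, Finset.sum_ite_eq',
    Finset.mem_univ, if_true]
  by_cases h : i = i'
  · subst h; simp
    rw [Finset.sum_comm]
    refine Finset.sum_congr rfl fun a _ => Finset.sum_congr rfl fun b _ => by ring
  · simp [h, fun x => Ne.symm h]

lemma key_det {n m : ℕ}
    (A : Matrix (Fin n) (Fin n) ℝ)
    (B : Fin n → Matrix (Fin m) (Fin m) ℝ)
    (v : Fin n → Fin m → ℝ) (μ : Fin n → ℝ)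
    (hμ : ∀ i, μ i = 1 ∨ μ i = -1)
    (lam : ℝ) (hunit : ∀ l, IsUnit (lam • (1 : Matrix (Fin m) (Fin m) ℝ) - B l).det) :
    (lam • (1 : Matrix (Fin n ⊕ (Fin m × Fin n)) (Fin n ⊕ (Fin m × Fin n)) ℝ) -
      Matrix.fromBlocks A
        (Matrix.of fun i (p : Fin m × Fin n) => if i = p.2 then μ i * v p.2 p.1 else 0)
        (Matrix.of fun (p : Fin m × Fin n) i => if i = p.2 then μ i * v p.2 p.1 else 0)
        (Matrix.blockDiagonal B)).det
    = (∏ l, (lam • (1 : Matrix (Fin m) (Fin m) ℝ) - B l).det) *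
      ((lam • (1 : Matrix (Fin n) (Fin n) ℝ) - A) -
        Matrix.diagonal (fun i =>
          v i ⬝ᵥ ((lam • (1 : Matrix (Fin m) (Fin m) ℝ) - B i)⁻¹ *ᵥ v i))).det := by
  set D : Fin n → Matrix (Fin m) (Fin m) ℝ := fun l => lam • 1 - B l with hD
  set P := (Matrix.of fun i (p : Fin m × Fin n) => if i = p.2 then μ i * v p.2 p.1 else 0)
  set Q := (Matrix.of fun (p : Fin m × Fin n) i => if i = p.2 then μ i * v p.2 p.1 else 0)
  have hblock : lam • (1 : Matrix (Fin n ⊕ (Fin m × Fin n)) (Fin n ⊕ (Fin m × Fin n)) ℝ) -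
      Matrix.fromBlocks A P Q (Matrix.blockDiagonal B)
      = Matrix.fromBlocks (lam • 1 - A) (-P) (-Q) (Matrix.blockDiagonal D) := by
    have hbd : Matrix.blockDiagonal D
        = lam • (1 : Matrix (Fin m × Fin n) (Fin m × Fin n) ℝ) - Matrix.blockDiagonal B := by
      have : D = (fun _ => lam • (1 : Matrix (Fin m) (Fin m) ℝ)) - B := by
        funext l; simp [hD]
      rw [this, Matrix.blockDiagonal_sub]
      congr 1
      have : (fun _ : Fin n => lam • (1 : Matrix (Fin m) (Fin m) ℝ))
          = lam • (1 : Fin n → Matrix (Fin m) (Fin m) ℝ) := rfl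
      rw [this, Matrix.blockDiagonal_smul, Matrix.blockDiagonal_one]
    rw [hbd, ← Matrix.fromBlocks_one, Matrix.fromBlocks_smul, sub_eq_add_neg,
      Matrix.fromBlocks_neg, Matrix.fromBlocks_add]
    simp [sub_eq_add_neg]
  have hDdet : IsUnit (Matrix.blockDiagonal D).det := by
    rw [Matrix.det_blockDiagonal]
    exact Finset.prod_induction _ IsUnit (fun a b => IsUnit.mul) isUnit_one fun l _ => hunit l
  haveI : Invertible (Matrix.blockDiagonal D) := Matrix.invertibleOfIsUnitDet _ hDdet
  have hinv : ⅟(Matrix.blockDiagonal D) = Matrix.blockDiagonal (fun l => (D l)⁻¹) := by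
    rw [Matrix.invOf_eq_nonsing_inv]
    apply Matrix.inv_eq_right_inv
    rw [← Matrix.blockDiagonal_mul]
    have : (fun l => D l * (D l)⁻¹) = fun _ => (1 : Matrix (Fin m) (Fin m) ℝ) := by
      funext l; exact Matrix.mul_nonsing_inv _ (hunit l)
    rw [this]; exact Matrix.blockDiagonal_one
  rw [hblock, Matrix.det_fromBlocks₂₂, hinv, Matrix.det_blockDiagonal]
  congr 1
  simp only [Matrix.neg_mul, Matrix.mul_neg, neg_neg]
  rw [key_prod]
  have hfun : (fun i => μ i * μ i * (v i ⬝ᵥ ((D i)⁻¹ *ᵥ v i)))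
      = (fun i => v i ⬝ᵥ ((lam • (1 : Matrix (Fin m) (Fin m) ℝ) - B i)⁻¹ *ᵥ v i)) := by
    funext i
    have h1 : μ i * μ i = 1 := by rcases hμ i with h | h <;> rw [h] <;> norm_num
    rw [h1, one_mul]
  rw [hfun]

/-- If `G'` and `G''` are cospectral signed graphs and `H_1, …, H_n` all have
equal signed coronals, then the generalized corona products `G'∘ΛH_l` and
`G''∘ΛH_l` are cospectral. -/
theorem corona_cospectral_base {n m : ℕ}
    (A₁ A₂ : Matrix (Fin n) (Fin n) ℝ)
    (B : Fin n → Matrix (Fin m) (Fin m) ℝ)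
    (v : Fin n → Fin m → ℝ) (μ₁ μ₂ : Fin n → ℝ)
    (hA₁ : A₁.IsSymm) (hA₂ : A₂.IsSymm) (hB : ∀ l, (B l).IsSymm)
    (hμ₁ : ∀ i, μ₁ i = 1 ∨ μ₁ i = -1) (hμ₂ : ∀ i, μ₂ i = 1 ∨ μ₂ i = -1)
    (hv : ∀ l j, v l j = 1 ∨ v l j = -1)
    (hcospec : ∀ x : ℝ, (x • (1 : Matrix (Fin n) (Fin n) ℝ) - A₁).det
      = (x • (1 : Matrix (Fin n) (Fin n) ℝ) - A₂).det)
    (hχ : ∀ x : ℝ, (∀ l, IsUnit (x • (1 : Matrix (Fin m) (Fin m) ℝ) - B l).det) →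
      ∀ l l', v l ⬝ᵥ ((x • (1 : Matrix (Fin m) (Fin m) ℝ) - B l)⁻¹ *ᵥ v l)
        = v l' ⬝ᵥ ((x • (1 : Matrix (Fin m) (Fin m) ℝ) - B l')⁻¹ *ᵥ v l')) :
    ∀ lam : ℝ, (∀ l, IsUnit (lam • (1 : Matrix (Fin m) (Fin m) ℝ) - B l).det) →
    (lam • (1 : Matrix (Fin n ⊕ (Fin m × Fin n)) (Fin n ⊕ (Fin m × Fin n)) ℝ) -
      Matrix.fromBlocks A₁
        (Matrix.of fun i (p : Fin m × Fin n) => if i = p.2 then μ₁ i * v p.2 p.1 else 0)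
        (Matrix.of fun (p : Fin m × Fin n) i => if i = p.2 then μ₁ i * v p.2 p.1 else 0)
        (Matrix.blockDiagonal B)).det
    = (lam • (1 : Matrix (Fin n ⊕ (Fin m × Fin n)) (Fin n ⊕ (Fin m × Fin n)) ℝ) -
      Matrix.fromBlocks A₂
        (Matrix.of fun i (p : Fin m × Fin n) => if i = p.2 then μ₂ i * v p.2 p.1 else 0)
        (Matrix.of fun (p : Fin m × Fin n) i => if i = p.2 then μ₂ i * v p.2 p.1 else 0)
        (Matrix.blockDiagonal B)).det := by
  intro lam hunit
  rw [key_det A₁ B v μ₁ hμ₁ lam hunit, key_det A₂ B v μ₂ hμ₂ lam hunit]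
  congr 1
  rcases Nat.eq_zero_or_pos n with hn | hn
  · subst hn
    simp [Matrix.det_isEmpty]
  · set l₀ : Fin n := ⟨0, hn⟩
    set c : ℝ := v l₀ ⬝ᵥ ((lam • (1 : Matrix (Fin m) (Fin m) ℝ) - B l₀)⁻¹ *ᵥ v l₀) with hc
    have hdiag : Matrix.diagonal (fun i =>
        v i ⬝ᵥ ((lam • (1 : Matrix (Fin m) (Fin m) ℝ) - B i)⁻¹ *ᵥ v i))
        = c • (1 : Matrix (Fin n) (Fin n) ℝ) := by
      ext i j
      by_cases h : i = j
      · subst h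
        simp [Matrix.diagonal_apply_eq, Matrix.one_apply, hc, hχ lam hunit i l₀]
      · simp [Matrix.diagonal_apply_ne _ h, Matrix.one_apply, h]
    rw [hdiag]
    have h1 : ∀ A : Matrix (Fin n) (Fin n) ℝ,
        lam • (1 : Matrix (Fin n) (Fin n) ℝ) - A - c • 1 = (lam - c) • 1 - A := by
      intro A; rw [sub_smul]; abel
    rw [h1, h1]
    exact hcospec (lam - c)
end

section
/- Let L(G) be the signed Laplacian of a signed graph G on n vertices and for each l let L(H_l) be the signed Laplacian of H_l on t_l vertices with marking vector v_l. Let V = diag(t_1,…,t_n). Then the signed Laplacian of the generalized corona product is L = [[L(G) + V, −PQ],[−(PQ)ᵀ, D_L + I]] (with D_L block diagonal of the L(H_l)) and its characteristic polynomial satisfies det(αI − L) = (∏_{l=1}^n det((α−1)I − L(H_l))) · det(diag(α − t_l − χ_{L,l}(α)) − L(G)), where χ_{L,l}(α) = v_lᵀ((α−1)I − L(H_l))⁻¹v_l, for all α making each (α−1)I − L(H_l) invertible. -/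
open Matrix BigOperators

variable {n : ℕ} {t : Fin n → ℕ}

lemma det_bd' (M : ∀ l, Matrix (Fin (t l)) (Fin (t l)) ℝ) :
    (blockDiagonal' M).det = ∏ l, (M l).det := by
  have hbt : BlockTriangular (blockDiagonal' M) Sigma.fst := by
    rintro ⟨l, i⟩ ⟨l', j⟩ h
    exact blockDiagonal'_apply_ne M i j (ne_of_gt h)
  rw [hbt.det_fintype]
  refine Finset.prod_congr rfl fun l _ => ?_
  let e : Fin (t l) ≃ {p : Σ l, Fin (t l) // p.1 = l} :=
    { toFun := fun k => ⟨⟨l, k⟩, rfl⟩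
      invFun := fun p => cast (congrArg (fun x => Fin (t x)) p.2) p.1.2
      left_inv := fun k => rfl
      right_inv := by rintro ⟨⟨l', k⟩, rfl⟩; rfl }
  have h : M l = ((blockDiagonal' M).toSquareBlock Sigma.fst l).submatrix e e := by
    ext k1 k2
    simp only [Matrix.submatrix_apply, toSquareBlock_def]
    exact (blockDiagonal'_apply_eq M l k1 k2).symm
  rw [h, det_submatrix_equiv_self]

lemma bd_mul_right (μ : Fin n → ℝ) (v : ∀ l, Fin (t l) → ℝ)
    (N : ∀ l, Matrix (Fin (t l)) (Fin (t l)) ℝ) :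
    blockDiagonal' N *
      (Matrix.of fun (p : Σ l, Fin (t l)) i => if i = p.1 then μ i * v p.1 p.2 else 0)
    = Matrix.of fun (p : Σ l, Fin (t l)) j =>
        if j = p.1 then μ j * (N p.1 *ᵥ v p.1) p.2 else 0 := by
  ext ⟨l, k⟩ j
  rw [Matrix.mul_apply, ← Finset.univ_sigma_univ, Finset.sum_sigma]
  rw [Finset.sum_eq_single l]
  · simp only [blockDiagonal'_apply_eq, Matrix.of_apply]
    split_ifs with h
    · rw [mulVec, dotProduct, Finset.mul_sum]
      exact Finset.sum_congr rfl fun k' _ => by ring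
    · simp
  · intro l' _ hne
    apply Finset.sum_eq_zero; intro k' _
    rw [blockDiagonal'_apply_ne _ _ _ (Ne.symm hne), zero_mul]
  · intro h; exact absurd (Finset.mem_univ l) h

lemma triple (μ : Fin n → ℝ) (v : ∀ l, Fin (t l) → ℝ)
    (N : ∀ l, Matrix (Fin (t l)) (Fin (t l)) ℝ) :
    (Matrix.of fun i (p : Σ l, Fin (t l)) => if i = p.1 then μ i * v p.1 p.2 else 0) *
      blockDiagonal' N *
      (Matrix.of fun (p : Σ l, Fin (t l)) i => if i = p.1 then μ i * v p.1 p.2 else 0)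
    = Matrix.diagonal (fun i => μ i * μ i * (v i ⬝ᵥ (N i *ᵥ v i))) := by
  rw [Matrix.mul_assoc, bd_mul_right]
  ext i j
  rw [Matrix.mul_apply, ← Finset.univ_sigma_univ, Finset.sum_sigma]
  rw [Finset.sum_eq_single i]
  · by_cases h : j = i
    · subst h
      simp only [Matrix.of_apply, Matrix.diagonal_apply_eq, eq_self_iff_true, if_true]
      rw [dotProduct, Finset.mul_sum]
      exact Finset.sum_congr rfl fun k _ => by ring
    · rw [Matrix.diagonal_apply_ne _ (Ne.symm h)]
      apply Finset.sum_eq_zero; intro k _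
      rw [Matrix.of_apply, Matrix.of_apply, if_neg h, mul_zero]
  · intro l' _ hne
    apply Finset.sum_eq_zero; intro k _
    rw [Matrix.of_apply, if_neg (Ne.symm hne), zero_mul]
  · intro h; exact absurd (Finset.mem_univ i) h

/-- Factorization of the signed Laplacian characteristic polynomial of the
generalized corona product, via the L-signed coronals
`χ_{L,l}(α) = v_lᵀ ((α-1)I - L(H_l))⁻¹ v_l`. -/
theorem corona_laplacian_charpoly {n : ℕ} (t : Fin n → ℕ)
    (LG : Matrix (Fin n) (Fin n) ℝ)
    (LH : ∀ l, Matrix (Fin (t l)) (Fin (t l)) ℝ)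
    (v : ∀ l, Fin (t l) → ℝ) (μ : Fin n → ℝ)
    (hLG : LG.IsSymm) (hLH : ∀ l, (LH l).IsSymm)
    (hμ : ∀ i, μ i = 1 ∨ μ i = -1) (hv : ∀ l j, v l j = 1 ∨ v l j = -1)
    (α : ℝ)
    (hinv : ∀ l, IsUnit ((α - 1) • (1 : Matrix (Fin (t l)) (Fin (t l)) ℝ) - LH l).det) :
    (α • (1 : Matrix (Fin n ⊕ (Σ l, Fin (t l))) (Fin n ⊕ (Σ l, Fin (t l))) ℝ) -
      Matrix.fromBlocks
        (LG + Matrix.diagonal (fun l => (t l : ℝ)))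
        (-(Matrix.of fun i (p : Σ l, Fin (t l)) => if i = p.1 then μ i * v p.1 p.2 else 0))
        (-(Matrix.of fun (p : Σ l, Fin (t l)) i => if i = p.1 then μ i * v p.1 p.2 else 0))
        (Matrix.blockDiagonal' LH + 1)).det
    = (∏ l, ((α - 1) • (1 : Matrix (Fin (t l)) (Fin (t l)) ℝ) - LH l).det) *
      (Matrix.diagonal (fun l => α - (t l : ℝ) -
          v l ⬝ᵥ (((α - 1) • (1 : Matrix (Fin (t l)) (Fin (t l)) ℝ) - LH l)⁻¹ *ᵥ v l))
        - LG).det := by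
  set S : ∀ l, Matrix (Fin (t l)) (Fin (t l)) ℝ :=
    fun l => (α - 1) • (1 : Matrix (Fin (t l)) (Fin (t l)) ℝ) - LH l with hS
  set B' : Matrix (Fin n) (Σ l, Fin (t l)) ℝ :=
    Matrix.of fun i (p : Σ l, Fin (t l)) => if i = p.1 then μ i * v p.1 p.2 else 0 with hB'
  set C' : Matrix (Σ l, Fin (t l)) (Fin n) ℝ :=
    Matrix.of fun (p : Σ l, Fin (t l)) i => if i = p.1 then μ i * v p.1 p.2 else 0 with hC'
  have hblock :
      (α • (1 : Matrix (Fin n ⊕ (Σ l, Fin (t l))) (Fin n ⊕ (Σ l, Fin (t l))) ℝ) -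
        Matrix.fromBlocks (LG + Matrix.diagonal fun l => (t l : ℝ)) (-B') (-C')
          (Matrix.blockDiagonal' LH + 1))
      = Matrix.fromBlocks
          (α • 1 - (LG + Matrix.diagonal fun l => (t l : ℝ))) B' C' (blockDiagonal' S) := by
    have h1 : (α • (1 : Matrix (Fin n ⊕ (Σ l, Fin (t l))) (Fin n ⊕ (Σ l, Fin (t l))) ℝ))
        = Matrix.fromBlocks (α • 1) 0 0 (α • 1) := by
      rw [← fromBlocks_one, fromBlocks_smul, smul_zero, smul_zero]
    have h2 : blockDiagonal' S =
        α • (1 : Matrix (Σ l, Fin (t l)) (Σ l, Fin (t l)) ℝ) - (blockDiagonal' LH + 1) := by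
      have h3 : S = ((α - 1) • 1 - LH : ∀ l, Matrix (Fin (t l)) (Fin (t l)) ℝ) := rfl
      rw [h3, blockDiagonal'_sub, blockDiagonal'_smul, blockDiagonal'_one, sub_smul, one_smul]
      abel
    rw [h1, h2, sub_eq_add_neg, Matrix.fromBlocks_neg, Matrix.fromBlocks_add]
    congr 1 <;> simp [sub_eq_add_neg]
  rw [hblock]
  -- invertibility of the block diagonal
  have hmul1 : blockDiagonal' S * blockDiagonal' (fun l => (S l)⁻¹) = 1 := by
    rw [← blockDiagonal'_mul]
    rw [show (fun l => S l * (S l)⁻¹) = fun l => (1 : Matrix (Fin (t l)) (Fin (t l)) ℝ) from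
      funext fun l => mul_nonsing_inv _ (hinv l)]
    exact blockDiagonal'_one
  have hmul2 : blockDiagonal' (fun l => (S l)⁻¹) * blockDiagonal' S = 1 := by
    rw [← blockDiagonal'_mul]
    rw [show (fun l => (S l)⁻¹ * S l) = fun l => (1 : Matrix (Fin (t l)) (Fin (t l)) ℝ) from
      funext fun l => nonsing_inv_mul _ (hinv l)]
    exact blockDiagonal'_one
  letI : Invertible (blockDiagonal' S) := ⟨blockDiagonal' (fun l => (S l)⁻¹), hmul2, hmul1⟩
  rw [det_fromBlocks₂₂]
  have hinvOf : ⅟(blockDiagonal' S) = blockDiagonal' (fun l => (S l)⁻¹) := rfl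
  rw [hinvOf, hB', hC']
  rw [det_bd', triple]
  have hμ2 : ∀ i : Fin n, μ i * μ i = 1 := fun i => by
    rcases hμ i with h | h <;> rw [h] <;> norm_num
  simp only [hμ2, one_mul, hS]
  congr 2
  ext i j
  by_cases h : i = j
  · subst h
    simp only [Matrix.sub_apply, Matrix.smul_apply, Matrix.one_apply_eq, Matrix.add_apply,
      Matrix.diagonal_apply_eq, smul_eq_mul]
    ring
  · simp only [Matrix.sub_apply, Matrix.smul_apply, Matrix.one_apply_ne h, Matrix.add_apply,
      Matrix.diagonal_apply_ne _ h, smul_eq_mul]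
    ring
end

section
/- Let G be a signed graph of order n whose constituent graphs H_1,…,H_n are co-regular signed graphs each of order m with the same co-regularity pair (r,k), so each vertex of each H_l has negative degree d⁻ = (r−k)/2. Then the signed Laplacian polynomial of the generalized corona product satisfies f_{L(G∘ΛH_l)}(α) = (∏_{l=1}^n f_{L(H_l)}(α−1)) · f_{L(G)}(α − m − m/(α − 1 − 2d⁻)). -/
open Matrix BigOperators

/-- Signed Laplacian polynomial of the generalized corona product when all the
`H_l` are co-regular of order `m` with common negative degree `d⁻`:
`f_{L(G∘ΛH_l)}(α) = (∏ f_{L(H_l)}(α-1)) · f_{L(G)}(α - m - m/(α-1-2d⁻))`. -/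
theorem corona_laplacian_coregular {n m : ℕ}
    (LG : Matrix (Fin n) (Fin n) ℝ)
    (LH : Fin n → Matrix (Fin m) (Fin m) ℝ)
    (v : Fin n → Fin m → ℝ) (μ : Fin n → ℝ) (dneg : ℝ)
    (hLG : LG.IsSymm) (hLH : ∀ l, (LH l).IsSymm)
    (hμ : ∀ i, μ i = 1 ∨ μ i = -1)
    (hv : ∀ l, (∀ j, v l j = 1) ∨ (∀ j, v l j = -1))
    (hreg : ∀ l, LH l *ᵥ v l = (2 * dneg) • v l)
    (α : ℝ) (hne : α - 1 - 2 * dneg ≠ 0)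
    (hinv : ∀ l, IsUnit ((α - 1) • (1 : Matrix (Fin m) (Fin m) ℝ) - LH l).det) :
    (α • (1 : Matrix (Fin n ⊕ (Fin m × Fin n)) (Fin n ⊕ (Fin m × Fin n)) ℝ) -
      Matrix.fromBlocks
        (LG + (m : ℝ) • (1 : Matrix (Fin n) (Fin n) ℝ))
        (-(Matrix.of fun i (p : Fin m × Fin n) => if i = p.2 then μ i * v p.2 p.1 else 0))
        (-(Matrix.of fun (p : Fin m × Fin n) i => if i = p.2 then μ i * v p.2 p.1 else 0))
        (Matrix.blockDiagonal LH + 1)).det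
    = (∏ l, ((α - 1) • (1 : Matrix (Fin m) (Fin m) ℝ) - LH l).det) *
      ((α - (m : ℝ) - (m : ℝ) / (α - 1 - 2 * dneg)) • (1 : Matrix (Fin n) (Fin n) ℝ)
        - LG).det := by
  classical
  set B : Matrix (Fin n) (Fin m × Fin n) ℝ :=
    Matrix.of (fun i (p : Fin m × Fin n) => if i = p.2 then μ i * v p.2 p.1 else 0) with hB
  set C : Matrix (Fin m × Fin n) (Fin n) ℝ :=
    Matrix.of (fun (p : Fin m × Fin n) i => if i = p.2 then μ i * v p.2 p.1 else 0) with hC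
  set D : Matrix (Fin m × Fin n) (Fin m × Fin n) ℝ :=
    Matrix.blockDiagonal (fun l => (α - 1) • (1 : Matrix (Fin m) (Fin m) ℝ) - LH l) with hD
  set A : Matrix (Fin n) (Fin n) ℝ := (α - m) • (1 : Matrix (Fin n) (Fin n) ℝ) - LG with hA
  have hMat : (α • (1 : Matrix (Fin n ⊕ (Fin m × Fin n)) (Fin n ⊕ (Fin m × Fin n)) ℝ) -
      Matrix.fromBlocks
        (LG + (m : ℝ) • (1 : Matrix (Fin n) (Fin n) ℝ))
        (-(Matrix.of fun i (p : Fin m × Fin n) => if i = p.2 then μ i * v p.2 p.1 else 0))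
        (-(Matrix.of fun (p : Fin m × Fin n) i => if i = p.2 then μ i * v p.2 p.1 else 0))
        (Matrix.blockDiagonal LH + 1)) = Matrix.fromBlocks A B C D := by
    ext i j
    rcases i with i | ⟨pk, pl⟩ <;> rcases j with j | ⟨qk, ql⟩ <;>
      simp [Matrix.one_apply, Matrix.blockDiagonal_apply, hA, hB, hC, hD, Prod.ext_iff] <;>
      split_ifs <;> simp_all <;> ring
  have hdet : IsUnit D.det := by
    rw [hD, Matrix.det_blockDiagonal]
    exact isUnit_iff_ne_zero.mpr (Finset.prod_ne_zero_iff.mpr fun l _ => (hinv l).ne_zero)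
  have : Invertible D := D.invertibleOfIsUnitDet hdet
  set c : ℝ := (α - 1 - 2 * dneg)⁻¹ with hc
  set C' : Matrix (Fin m × Fin n) (Fin n) ℝ :=
    Matrix.of (fun (p : Fin m × Fin n) i => if i = p.2 then c * (μ i * v p.2 p.1) else 0) with hC'
  have hmv : ∀ l, ((α - 1) • (1 : Matrix (Fin m) (Fin m) ℝ) - LH l) *ᵥ v l
      = (α - 1 - 2 * dneg) • v l := by
    intro l
    rw [Matrix.sub_mulVec, hreg l, Matrix.smul_mulVec, Matrix.one_mulVec]
    ext k; simp; ring
  have hDC' : D * C' = C := by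
    ext p j
    rcases p with ⟨k, l⟩
    simp only [Matrix.mul_apply, hD, hC', hC, Matrix.blockDiagonal_apply, Matrix.of_apply,
      Fintype.sum_prod_type_right]
    rw [Finset.sum_eq_single l]
    · have hsum : ∀ k' : Fin m,
          (if l = l then ((α - 1) • (1 : Matrix (Fin m) (Fin m) ℝ) - LH l) k k' else 0) *
            (if j = l then c * (μ j * v l k') else 0)
          = (if j = l then c * μ j *
              (((α - 1) • (1 : Matrix (Fin m) (Fin m) ℝ) - LH l) k k' * v l k') else 0) := by
        intro k'; rcases eq_or_ne j l with hj | hj <;> simp [hj] <;> ring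
      rw [Finset.sum_congr rfl (fun k' _ => hsum k')]
      by_cases hj : j = l
      · simp only [if_pos hj, ← Finset.mul_sum]
        have hent := congrFun (hmv l) k
        simp only [Matrix.mulVec, dotProduct, Pi.smul_apply, smul_eq_mul] at hent
        rw [hent, hc]
        field_simp
      · simp [hj]
    · intro l' _ hl'
      apply Finset.sum_eq_zero
      intro k' _
      simp [Ne.symm hl']
    · intro h; exact absurd (Finset.mem_univ l) h
  have hDinvC : D⁻¹ * C = C' := by
    calc D⁻¹ * C = D⁻¹ * (D * C') := by rw [hDC']
      _ = C' := by rw [← Matrix.mul_assoc, Matrix.nonsing_inv_mul D hdet, Matrix.one_mul]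
  have hvsq : ∀ l k, v l k * v l k = 1 := by
    intro l k; rcases hv l with h | h <;> rw [h k] <;> norm_num
  have hμsq : ∀ i, μ i * μ i = 1 := by
    intro i; rcases hμ i with h | h <;> rw [h] <;> norm_num
  have hBC' : B * C' = ((m : ℝ) * c) • (1 : Matrix (Fin n) (Fin n) ℝ) := by
    ext i j
    simp only [Matrix.mul_apply, hB, hC', Matrix.of_apply, Fintype.sum_prod_type_right,
      Matrix.smul_apply, Matrix.one_apply, smul_eq_mul]
    by_cases hij : i = j
    · subst hij
      rw [Finset.sum_eq_single i
        (fun l _ hl => Finset.sum_eq_zero fun k _ => by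
          rw [if_neg fun h => hl h.symm, zero_mul])
        (fun h => absurd (Finset.mem_univ i) h)]
      have key : ∀ k : Fin m,
          (if i = i then μ i * v i k else 0) * (if i = i then c * (μ i * v i k) else 0) = c := by
        intro k
        rw [if_pos rfl, if_pos rfl]
        have h3 : (μ i * v i k) * (c * (μ i * v i k))
            = c * ((μ i * μ i) * (v i k * v i k)) := by ring
        rw [h3, hμsq i, hvsq i k]; ring
      rw [Finset.sum_congr rfl fun k _ => key k, if_pos rfl, Finset.sum_const]
      simp [Finset.card_univ, mul_comm]
    · rw [if_neg hij, mul_zero]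
      apply Finset.sum_eq_zero
      intro l _
      apply Finset.sum_eq_zero
      intro k _
      by_cases h1 : i = l <;> by_cases h2 : j = l <;> simp_all
  have hdetD : D.det = ∏ l, ((α - 1) • (1 : Matrix (Fin m) (Fin m) ℝ) - LH l).det := by
    rw [hD, Matrix.det_blockDiagonal]
  rw [hMat, Matrix.det_fromBlocks₂₂, Matrix.invOf_eq_nonsing_inv, hdetD, Matrix.mul_assoc, hDinvC, hBC']
  congr 1
  congr 1
  ext i j
  simp only [Matrix.sub_apply, Matrix.smul_apply, Matrix.one_apply, smul_eq_mul, hA, hc]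
  rw [div_eq_mul_inv]
  split_ifs <;> ring
end

section
/- Let G be a signed co-regular bipartite graph with co-regularity pair (r,k), with n = 2h vertices split into two parts of size h each. Take H_1 ≅ … ≅ H_h ≅ K̄_m (edgeless on m vertices) and H_{h+1} ≅ … ≅ H_n ≅ K̄_s (edgeless on s vertices). Then f_{L(G∘ΛH_l)}(α) = (α−1)^{h(m+s)} · f_G(√((α − m − r − m/(α−1))(α − s − r − s/(α−1)))), where f_G is the adjacency characteristic polynomial of G, interpreted via the bipartite factorization f_G(c) with c² = (α − m − r − m/(α−1))(α − s − r − s/(α−1)). -/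
open Matrix BigOperators Polynomial


lemma det_fromBlocks_diag {h : ℕ} (W : Matrix (Fin h) (Fin h) ℝ) (a b : ℝ) :
    (Matrix.fromBlocks (Matrix.diagonal fun _ => a) W Wᵀ (Matrix.diagonal fun _ => b)).det
      = (Matrix.diagonal (fun _ : Fin h => a * b) - W * Wᵀ).det := by
  set M : Matrix (Fin h ⊕ Fin h) (Fin h ⊕ Fin h) ℝ[X] :=
    Matrix.fromBlocks (Matrix.diagonal fun _ => C a) (W.map C) (W.map C)ᵀ
      (Matrix.diagonal fun _ => (X : ℝ[X])) with hM
  set N : Matrix (Fin h) (Fin h) ℝ[X] :=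
    Matrix.diagonal (fun _ => C a * X) - (W.map C) * (W.map C)ᵀ with hN
  have hdet : ∀ {n : Type} [Fintype n] [DecidableEq n] (P : Matrix n n ℝ[X]) (x : ℝ),
      eval x P.det = (P.map (eval x)).det := fun P x => by
    simpa using (RingHom.map_det (evalRingHom x) P)
  have hWmap : ∀ x : ℝ, (W.map C).map (eval x) = W := by
    intro x; ext i j; simp
  have hMmap : ∀ x : ℝ, eval x M.det =
      (Matrix.fromBlocks (Matrix.diagonal fun _ => a) W Wᵀ
        (Matrix.diagonal fun _ => x)).det := by
    intro x
    rw [hdet M x, hM, Matrix.fromBlocks_map, Matrix.diagonal_map (by simp),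
      Matrix.diagonal_map (by simp), Matrix.transpose_map, hWmap]
    simp
  have hNmap : ∀ x : ℝ, eval x N.det =
      (Matrix.diagonal (fun _ : Fin h => a * x) - W * Wᵀ).det := by
    intro x
    rw [hdet N x]
    congr 1
    ext i j
    simp [hN, Matrix.sub_apply, Matrix.diagonal_apply, Matrix.mul_apply,
      apply_ite (eval x), Polynomial.eval_finset_sum]
  have key : M.det = N.det := by
    apply Polynomial.eq_of_infinite_eval_eq
    apply Set.Infinite.mono (s := {(0:ℝ)}ᶜ)
    · intro x hx
      have hx : x ≠ 0 := hx
      have hone : (Matrix.diagonal fun _ : Fin h => x) = x • 1 := by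
        rw [Matrix.smul_one_eq_diagonal]
      haveI : Invertible (Matrix.diagonal fun _ : Fin h => x) :=
        ⟨Matrix.diagonal (fun _ => x⁻¹), by
          simp [Matrix.diagonal_mul_diagonal, inv_mul_cancel₀ hx], by
          simp [Matrix.diagonal_mul_diagonal, mul_inv_cancel₀ hx]⟩
      show eval x M.det = eval x N.det
      rw [hMmap x, hNmap x, Matrix.det_fromBlocks₂₂]
      have hinv : ⅟(Matrix.diagonal fun _ : Fin h => x) = Matrix.diagonal fun _ => x⁻¹ :=
        invOf_eq_right_inv (by simp [Matrix.diagonal_mul_diagonal, mul_inv_cancel₀ hx])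
      have hmid : W * Matrix.diagonal (fun _ : Fin h => x⁻¹) * Wᵀ = x⁻¹ • (W * Wᵀ) := by
        rw [show (Matrix.diagonal fun _ : Fin h => x⁻¹) = x⁻¹ • 1 from
          (Matrix.smul_one_eq_diagonal _).symm, Matrix.mul_smul, Matrix.mul_one,
          Matrix.smul_mul]
      rw [hinv, hmid, Matrix.det_diagonal]
      have hx2 : (Matrix.diagonal (fun _ : Fin h => a * x) - W * Wᵀ)
          = x • (Matrix.diagonal (fun _ : Fin h => a) - x⁻¹ • (W * Wᵀ)) := by
        rw [smul_sub, smul_smul, mul_inv_cancel₀ hx, one_smul]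
        congr 1
        ext i j
        simp [Matrix.diagonal_apply, apply_ite (fun y : ℝ => x * y), mul_comm]
      rw [hx2, Matrix.det_smul]
      simp [Fintype.card_fin, mul_comm]
    · exact Set.Finite.infinite_compl (Set.finite_singleton 0)
  have := congrArg (eval b) key
  rw [hMmap b, hNmap b] at this
  exact this

/-- main theorem -/
theorem corona_laplacian_bipartite_edgeless {h m s : ℕ}
    (W : Matrix (Fin h) (Fin h) ℝ) (r k : ℝ) (μ₁ μ₂ : Fin h → ℝ)
    (hμ₁ : ∀ i, μ₁ i = 1 ∨ μ₁ i = -1) (hμ₂ : ∀ i, μ₂ i = 1 ∨ μ₂ i = -1)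
    (hrreg : ∀ i, ∑ j, |W i j| = r)
    (hrreg' : ∀ j, ∑ i, |W i j| = r)
    (hnetreg : (Matrix.fromBlocks 0 W Wᵀ (0 : Matrix (Fin h) (Fin h) ℝ)) *ᵥ
        (Sum.elim μ₁ μ₂) = k • Sum.elim μ₁ μ₂)
    (α : ℝ) (hα : α ≠ 1) :
    (α • (1 : Matrix ((Fin h ⊕ Fin h) ⊕ ((Fin h × Fin m) ⊕ (Fin h × Fin s)))
            ((Fin h ⊕ Fin h) ⊕ ((Fin h × Fin m) ⊕ (Fin h × Fin s))) ℝ) -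
      Matrix.fromBlocks
        ((r • (1 : Matrix (Fin h ⊕ Fin h) (Fin h ⊕ Fin h) ℝ)
            - Matrix.fromBlocks 0 W Wᵀ 0)
          + Matrix.fromBlocks ((m : ℝ) • 1) 0 0 ((s : ℝ) • 1))
        (-(Matrix.fromBlocks
            (Matrix.of fun i (p : Fin h × Fin m) => if i = p.1 then μ₁ i else 0) 0
            0 (Matrix.of fun i (p : Fin h × Fin s) => if i = p.1 then μ₂ i else 0)))
        (-(Matrix.fromBlocks
            (Matrix.of fun i (p : Fin h × Fin m) => if i = p.1 then μ₁ i else 0) 0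
            0 (Matrix.of fun i (p : Fin h × Fin s) => if i = p.1 then μ₂ i else 0))ᵀ)
        1).det
    = (α - 1) ^ (h * (m + s)) *
      (((α - (m : ℝ) - r - (m : ℝ) / (α - 1)) * (α - (s : ℝ) - r - (s : ℝ) / (α - 1)))
          • (1 : Matrix (Fin h) (Fin h) ℝ) - W * Wᵀ).det := by
  have hα1 : α - 1 ≠ 0 := sub_ne_zero.mpr hα
  set a : ℝ := α - (m : ℝ) - r - (m : ℝ) / (α - 1) with ha
  set b : ℝ := α - (s : ℝ) - r - (s : ℝ) / (α - 1) with hb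
  set B₁ : Matrix (Fin h) (Fin h × Fin m) ℝ :=
    Matrix.of fun i (p : Fin h × Fin m) => if i = p.1 then μ₁ i else 0 with hB₁def
  set B₂ : Matrix (Fin h) (Fin h × Fin s) ℝ :=
    Matrix.of fun i (p : Fin h × Fin s) => if i = p.1 then μ₂ i else 0 with hB₂def
  set A' : Matrix (Fin h ⊕ Fin h) (Fin h ⊕ Fin h) ℝ :=
    Matrix.fromBlocks (Matrix.diagonal fun _ => α - r - (m : ℝ)) W Wᵀ
      (Matrix.diagonal fun _ => α - r - (s : ℝ)) with hA'
  set Bm : Matrix (Fin h ⊕ Fin h) ((Fin h × Fin m) ⊕ (Fin h × Fin s)) ℝ :=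
    Matrix.fromBlocks B₁ 0 0 B₂ with hBm
  set Dm : Matrix ((Fin h × Fin m) ⊕ (Fin h × Fin s))
      ((Fin h × Fin m) ⊕ (Fin h × Fin s)) ℝ := (α - 1) • 1 with hDm
  have hbig :
      (α • (1 : Matrix ((Fin h ⊕ Fin h) ⊕ ((Fin h × Fin m) ⊕ (Fin h × Fin s)))
            ((Fin h ⊕ Fin h) ⊕ ((Fin h × Fin m) ⊕ (Fin h × Fin s))) ℝ) -
        Matrix.fromBlocks
          ((r • (1 : Matrix (Fin h ⊕ Fin h) (Fin h ⊕ Fin h) ℝ)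
              - Matrix.fromBlocks 0 W Wᵀ 0)
            + Matrix.fromBlocks ((m : ℝ) • 1) 0 0 ((s : ℝ) • 1))
          (-(Matrix.fromBlocks B₁ 0 0 B₂))
          (-(Matrix.fromBlocks B₁ 0 0 B₂)ᵀ)
          1) = Matrix.fromBlocks A' Bm Bmᵀ Dm := by
    ext i j
    rcases i with (i | i) | (p | p) <;> rcases j with (j | j) | (q | q) <;>
      simp [hA', hBm, hDm, Matrix.sub_apply, Matrix.smul_apply, Matrix.add_apply,
        Matrix.neg_apply, Matrix.one_apply, Matrix.diagonal_apply,
        Matrix.transpose_apply] <;>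
      split_ifs <;> ring
  rw [hbig]
  set E : Matrix ((Fin h × Fin m) ⊕ (Fin h × Fin s)) ((Fin h × Fin m) ⊕ (Fin h × Fin s)) ℝ :=
    (α - 1)⁻¹ • (1 : Matrix ((Fin h × Fin m) ⊕ (Fin h × Fin s))
      ((Fin h × Fin m) ⊕ (Fin h × Fin s)) ℝ) with hE
  haveI : Invertible Dm :=
    ⟨E, by rw [hDm, hE]; rw [smul_mul_smul_comm]; simp [inv_mul_cancel₀ hα1],
      by rw [hDm, hE]; rw [smul_mul_smul_comm]; simp [mul_inv_cancel₀ hα1]⟩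
  have hinv : ⅟Dm = E :=
    invOf_eq_right_inv (by rw [hDm, hE, smul_mul_smul_comm]; simp [mul_inv_cancel₀ hα1])
  rw [Matrix.det_fromBlocks₂₂, hinv]
  have hdetD : Dm.det = (α - 1) ^ (h * (m + s)) := by
    rw [hDm, Matrix.det_smul, Matrix.det_one, mul_one,
      show Fintype.card ((Fin h × Fin m) ⊕ (Fin h × Fin s)) = h * (m + s) by
        simp [Nat.mul_add]]
  have hBB₁ : B₁ * B₁ᵀ = Matrix.diagonal (fun _ : Fin h => (m : ℝ)) := by
    ext i j
    rcases eq_or_ne i j with rfl | hij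
    · have h1 : μ₁ i * μ₁ i = 1 := by rcases hμ₁ i with h' | h' <;> rw [h'] <;> norm_num
      simp [Matrix.mul_apply, hB₁def, Fintype.sum_prod_type, Matrix.diagonal_apply, h1]
    · simp [Matrix.mul_apply, hB₁def, Fintype.sum_prod_type, Matrix.diagonal_apply, hij,
        Ne.symm hij, ite_and]
  have hBB₂ : B₂ * B₂ᵀ = Matrix.diagonal (fun _ : Fin h => (s : ℝ)) := by
    ext i j
    rcases eq_or_ne i j with rfl | hij
    · have h1 : μ₂ i * μ₂ i = 1 := by rcases hμ₂ i with h' | h' <;> rw [h'] <;> norm_num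
      simp [Matrix.mul_apply, hB₂def, Fintype.sum_prod_type, Matrix.diagonal_apply, h1]
    · simp [Matrix.mul_apply, hB₂def, Fintype.sum_prod_type, Matrix.diagonal_apply, hij,
        Ne.symm hij, ite_and]
  have hsc : A' - Bm * E * Bmᵀ =
      Matrix.fromBlocks (Matrix.diagonal fun _ => a) W Wᵀ (Matrix.diagonal fun _ => b) := by
    simp only [hE, Matrix.mul_smul, Matrix.mul_one, Matrix.smul_mul, hBm,
      Matrix.fromBlocks_transpose, Matrix.fromBlocks_multiply, Matrix.mul_zero,
      Matrix.zero_mul, add_zero, zero_add, hBB₁, hBB₂]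
    ext i j
    rcases i with i | i <;> rcases j with j | j <;>
      simp [hA', ha, hb, Matrix.sub_apply, Matrix.smul_apply, Matrix.diagonal_apply,
        div_eq_mul_inv, mul_comm] <;> split_ifs <;> ring
  rw [hsc, det_fromBlocks_diag, hdetD]
  congr 2
  rw [← Matrix.smul_one_eq_diagonal]
end

section
/- Let G be a signed graph of order n and H_1,…,H_{2n} a family of 2n signed graphs, all pairwise cospectral (equal adjacency characteristic polynomials) and all with equal signed coronals. Then the generalized corona products G ∘ Λ_{l=1}^{n} H_l and G ∘ Λ_{l=n+1}^{2n} H_l are cospectral. -/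
open Matrix BigOperators

lemma corona_det_eq {n m : ℕ} (A : Matrix (Fin n) (Fin n) ℝ)
    (C : Fin n → Matrix (Fin m) (Fin m) ℝ) (w : Fin n → Fin m → ℝ) (μ : Fin n → ℝ)
    (hμ : ∀ i, μ i * μ i = 1) (lam : ℝ)
    (hinv : ∀ l, IsUnit (lam • (1 : Matrix (Fin m) (Fin m) ℝ) - C l).det) :
    (lam • (1 : Matrix (Fin n ⊕ (Fin m × Fin n)) (Fin n ⊕ (Fin m × Fin n)) ℝ) -
      Matrix.fromBlocks A
        (Matrix.of fun i (p : Fin m × Fin n) => if i = p.2 then μ i * w p.2 p.1 else 0)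
        (Matrix.of fun (p : Fin m × Fin n) i => if i = p.2 then μ i * w p.2 p.1 else 0)
        (Matrix.blockDiagonal C)).det
    = (∏ l, (lam • (1 : Matrix (Fin m) (Fin m) ℝ) - C l).det) *
      (lam • (1 : Matrix (Fin n) (Fin n) ℝ) - A -
        Matrix.diagonal (fun i =>
          w i ⬝ᵥ ((lam • (1 : Matrix (Fin m) (Fin m) ℝ) - C i)⁻¹ *ᵥ w i))).det := by
  classical
  set X : Matrix (Fin n) (Fin m × Fin n) ℝ :=
    Matrix.of fun i (p : Fin m × Fin n) => if i = p.2 then μ i * w p.2 p.1 else 0 with hX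
  set Y : Matrix (Fin m × Fin n) (Fin n) ℝ :=
    Matrix.of fun (p : Fin m × Fin n) i => if i = p.2 then μ i * w p.2 p.1 else 0 with hY
  set D : Matrix (Fin m × Fin n) (Fin m × Fin n) ℝ :=
    Matrix.blockDiagonal (fun l => lam • (1 : Matrix (Fin m) (Fin m) ℝ) - C l) with hD
  have hDdet : D.det = ∏ l, (lam • (1 : Matrix (Fin m) (Fin m) ℝ) - C l).det := by
    rw [hD, Matrix.det_blockDiagonal]
  have hDunit : IsUnit D.det := by
    rw [hDdet]
    exact Finset.prod_induction _ IsUnit (fun a b ha hb => ha.mul hb) isUnit_one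
      (fun l _ => hinv l)
  haveI : Invertible D := D.invertibleOfIsUnitDet hDunit
  have hsplit : (lam • (1 : Matrix (Fin n ⊕ (Fin m × Fin n)) (Fin n ⊕ (Fin m × Fin n)) ℝ) -
      Matrix.fromBlocks A X Y (Matrix.blockDiagonal C))
      = Matrix.fromBlocks (lam • (1 : Matrix (Fin n) (Fin n) ℝ) - A) (-X) (-Y) D := by
    have fbsub : ∀ (a a' : Matrix (Fin n) (Fin n) ℝ) (b b' : Matrix (Fin n) (Fin m × Fin n) ℝ)
        (c c' : Matrix (Fin m × Fin n) (Fin n) ℝ)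
        (d d' : Matrix (Fin m × Fin n) (Fin m × Fin n) ℝ),
        Matrix.fromBlocks a b c d - Matrix.fromBlocks a' b' c' d'
          = Matrix.fromBlocks (a - a') (b - b') (c - c') (d - d') := by
      intros
      simp [sub_eq_add_neg, Matrix.fromBlocks_neg, Matrix.fromBlocks_add]
    have hbd : lam • (1 : Matrix (Fin m × Fin n) (Fin m × Fin n) ℝ) - Matrix.blockDiagonal C
        = D := by
      rw [hD, ← Matrix.blockDiagonal_one, ← Matrix.blockDiagonal_smul,
        ← Matrix.blockDiagonal_sub]
      rfl
    rw [← Matrix.fromBlocks_one, Matrix.fromBlocks_smul, fbsub]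
    simp only [smul_zero, zero_sub]
    rw [hbd]
  have hDinv : ⅟ D = Matrix.blockDiagonal
      (fun l => (lam • (1 : Matrix (Fin m) (Fin m) ℝ) - C l)⁻¹) := by
    rw [Matrix.invOf_eq_nonsing_inv]
    apply Matrix.inv_eq_left_inv
    rw [hD, ← Matrix.blockDiagonal_mul, ← Matrix.blockDiagonal_one]
    refine congrArg _ (funext fun l => ?_)
    simp [Matrix.nonsing_inv_mul _ (hinv l)]
  have hschur : (-X) * ⅟ D * (-Y) =
      Matrix.diagonal (fun i =>
        w i ⬝ᵥ ((lam • (1 : Matrix (Fin m) (Fin m) ℝ) - C i)⁻¹ *ᵥ w i)) := by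
    simp only [Matrix.neg_mul, Matrix.mul_neg, neg_neg, hDinv]
    ext i j
    simp only [Matrix.mul_apply, Matrix.blockDiagonal_apply, hX, hY, Matrix.of_apply,
      Fintype.sum_prod_type, ite_mul, mul_ite, zero_mul, mul_zero,
      Finset.sum_ite_eq, Finset.sum_ite_eq', Finset.mem_univ, if_true,
      Matrix.diagonal_apply]
    by_cases hij : i = j
    · subst hij
      simp only [if_pos rfl, if_true]
      simp only [dotProduct, Matrix.mulVec, Finset.mul_sum, Finset.sum_mul]
      rw [Finset.sum_comm]
      refine Finset.sum_congr rfl fun a _ => Finset.sum_congr rfl fun b _ => ?_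
      linear_combination (w i a * (lam • (1 : Matrix (Fin m) (Fin m) ℝ) - C i)⁻¹ a b * w i b) * hμ i
    · simp [hij]
  rw [hsplit, Matrix.det_fromBlocks₂₂, hschur, hDdet, sub_sub]

/-- If `H_1, …, H_{2n}` is a family of pairwise cospectral signed graphs with
equal signed coronals, then the generalized corona products of `G` with the
first `n` and with the last `n` of them are cospectral. -/
theorem corona_cospectral_families {n m : ℕ}
    (A : Matrix (Fin n) (Fin n) ℝ)
    (B : Fin (n + n) → Matrix (Fin m) (Fin m) ℝ)
    (v : Fin (n + n) → Fin m → ℝ) (μ : Fin n → ℝ)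
    (hA : A.IsSymm) (hB : ∀ l, (B l).IsSymm)
    (hμ : ∀ i, μ i = 1 ∨ μ i = -1) (hv : ∀ l j, v l j = 1 ∨ v l j = -1)
    (hcospec : ∀ (x : ℝ) (l l' : Fin (n + n)),
      (x • (1 : Matrix (Fin m) (Fin m) ℝ) - B l).det
        = (x • (1 : Matrix (Fin m) (Fin m) ℝ) - B l').det)
    (hχ : ∀ x : ℝ, (∀ l, IsUnit (x • (1 : Matrix (Fin m) (Fin m) ℝ) - B l).det) →
      ∀ l l' : Fin (n + n),
        v l ⬝ᵥ ((x • (1 : Matrix (Fin m) (Fin m) ℝ) - B l)⁻¹ *ᵥ v l)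
          = v l' ⬝ᵥ ((x • (1 : Matrix (Fin m) (Fin m) ℝ) - B l')⁻¹ *ᵥ v l')) :
    ∀ lam : ℝ, (∀ l, IsUnit (lam • (1 : Matrix (Fin m) (Fin m) ℝ) - B l).det) →
    (lam • (1 : Matrix (Fin n ⊕ (Fin m × Fin n)) (Fin n ⊕ (Fin m × Fin n)) ℝ) -
      Matrix.fromBlocks A
        (Matrix.of fun i (p : Fin m × Fin n) =>
          if i = p.2 then μ i * v (Fin.castAdd n p.2) p.1 else 0)
        (Matrix.of fun (p : Fin m × Fin n) i =>
          if i = p.2 then μ i * v (Fin.castAdd n p.2) p.1 else 0)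
        (Matrix.blockDiagonal fun l => B (Fin.castAdd n l))).det
    = (lam • (1 : Matrix (Fin n ⊕ (Fin m × Fin n)) (Fin n ⊕ (Fin m × Fin n)) ℝ) -
      Matrix.fromBlocks A
        (Matrix.of fun i (p : Fin m × Fin n) =>
          if i = p.2 then μ i * v (Fin.natAdd n p.2) p.1 else 0)
        (Matrix.of fun (p : Fin m × Fin n) i =>
          if i = p.2 then μ i * v (Fin.natAdd n p.2) p.1 else 0)
        (Matrix.blockDiagonal fun l => B (Fin.natAdd n l))).det := by
  intro lam hunit
  have hμ' : ∀ i, μ i * μ i = 1 := by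
    intro i
    rcases hμ i with h | h <;> rw [h] <;> norm_num
  rw [corona_det_eq A (fun l => B (Fin.castAdd n l)) (fun l => v (Fin.castAdd n l)) μ hμ' lam
      (fun l => hunit _),
    corona_det_eq A (fun l => B (Fin.natAdd n l)) (fun l => v (Fin.natAdd n l)) μ hμ' lam
      (fun l => hunit _)]
  congr 1
  · exact Finset.prod_congr rfl fun l _ => hcospec lam _ _
  · have : (fun i => v (Fin.castAdd n i) ⬝ᵥ
        ((lam • (1 : Matrix (Fin m) (Fin m) ℝ) - B (Fin.castAdd n i))⁻¹ *ᵥ v (Fin.castAdd n i)))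
      = fun i => v (Fin.natAdd n i) ⬝ᵥ
        ((lam • (1 : Matrix (Fin m) (Fin m) ℝ) - B (Fin.natAdd n i))⁻¹ *ᵥ v (Fin.natAdd n i)) :=
      funext fun i => hχ lam hunit _ _
    rw [this]
end

section
/- If G and H are signed graphs on n and m vertices respectively, then the characteristic polynomial of the (ordinary) corona product G∘H of signed graphs satisfies f_{G∘H}(λ) = (f_H(λ))^n · f_G(λ − χ_H(λ)), where χ_H(λ) = μ_H[V_H]ᵀ(λI − A(H))⁻¹μ_H[V_H] is the signed coronal of H. -/
/-!
In `λI - A(G∘H)` the lower right block is block diagonal with `n` copies of `λI - A(H)`, so the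
Schur complement formula gives `f_H(λ)^n · det(λI - A(G) - J (I ⊗ (λI - A(H))⁻¹) Jᵀ)`, `J` being
the off-diagonal block. Since vertex `i` of `G` only sees the `i`-th copy of `H`, the correction
`J (I ⊗ N) Jᵀ` is diagonal with entries `μ_G(i)² · μ_Hᵀ N μ_H`, i.e. `χ_H(λ) · I`.
-/

namespace Matrix

variable {R : Type*} [CommRing R]

/-- Column `(j, k)` is vertex `j` of the `k`-th copy of `H`. -/
def coronaJoin {ι κ : Type*} [DecidableEq ι] (u : ι → R) (v : κ → R) : Matrix ι (κ × ι) R :=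
  of fun i p => if i = p.2 then u i * v p.1 else 0

theorem coronaJoin_mul_blockDiagonal_mul_transpose {ι κ : Type*} [Fintype ι] [DecidableEq ι]
    [Fintype κ] (u : ι → R) (v : κ → R) (N : Matrix κ κ R) :
    coronaJoin u v * blockDiagonal (fun _ : ι => N) * (coronaJoin u v)ᵀ =
      (v ⬝ᵥ N *ᵥ v) • diagonal (fun i => u i * u i) := by
  ext i j
  rcases eq_or_ne i j with rfl | hij
  · simp only [coronaJoin, mul_apply, Fintype.sum_prod_type, blockDiagonal_apply, transpose_apply,
      of_apply, smul_apply, diagonal_apply_eq, smul_eq_mul, dotProduct, mulVec, Finset.sum_mul,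
      Finset.mul_sum, ite_mul, mul_ite, zero_mul, mul_zero, Finset.sum_ite_eq, Finset.sum_ite_eq',
      Finset.mem_univ, if_true]
    rw [Finset.sum_comm]
    exact Finset.sum_congr rfl fun _ _ => Finset.sum_congr rfl fun _ _ => by ring
  · simp [coronaJoin, mul_apply, Fintype.sum_prod_type, blockDiagonal_apply, hij]

theorem smul_one_sub_fromBlocks {l m : Type*} [DecidableEq l] [DecidableEq m] (lam : R)
    (A : Matrix l l R) (B : Matrix l m R) (C : Matrix m l R) (D : Matrix m m R) :
    lam • 1 - fromBlocks A B C D = fromBlocks (lam • 1 - A) (-B) (-C) (lam • 1 - D) := by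
  rw [← fromBlocks_one, fromBlocks_smul, sub_eq_add_neg, fromBlocks_neg, fromBlocks_add]
  simp [sub_eq_add_neg]

theorem smul_one_sub_blockDiagonal {κ o : Type*} [DecidableEq κ] [DecidableEq o] (lam : R)
    (M : o → Matrix κ κ R) :
    lam • 1 - blockDiagonal M = blockDiagonal fun i => lam • 1 - M i := by
  rw [show (fun i => lam • 1 - M i) = lam • 1 - M from rfl, blockDiagonal_sub,
    blockDiagonal_smul, blockDiagonal_one]

theorem blockDiagonal_mul_blockDiagonal_inv {κ o : Type*} [Fintype κ] [DecidableEq κ]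
    [Fintype o] [DecidableEq o] (M : o → Matrix κ κ R) (hM : ∀ i, IsUnit (M i).det) :
    blockDiagonal M * blockDiagonal (fun i => (M i)⁻¹) = 1 := by
  rw [← blockDiagonal_mul]
  simp only [mul_nonsing_inv _ (hM _)]
  exact blockDiagonal_one

theorem det_smul_one_sub_fromBlocks_blockDiagonal {l κ o : Type*} [Fintype l] [DecidableEq l]
    [Fintype κ] [DecidableEq κ] [Fintype o] [DecidableEq o] (lam : R) (A : Matrix l l R)
    (J : Matrix l (κ × o) R) (K : Matrix (κ × o) l R) (D : Matrix κ κ R)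
    (hD : IsUnit (lam • 1 - D).det) :
    (lam • 1 - fromBlocks A J K (blockDiagonal fun _ : o => D)).det =
      (lam • 1 - D).det ^ Fintype.card o *
        (lam • 1 - A - J * blockDiagonal (fun _ : o => (lam • 1 - D)⁻¹) * K).det := by
  have hinv := blockDiagonal_mul_blockDiagonal_inv (fun _ : o => lam • 1 - D) fun _ => hD
  let := invertibleOfRightInverse _ _ hinv
  rw [smul_one_sub_fromBlocks, smul_one_sub_blockDiagonal, det_fromBlocks₂₂,
    invOf_eq_right_inv hinv, det_blockDiagonal, Finset.prod_const, Finset.card_univ,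
    Matrix.neg_mul, Matrix.mul_neg, Matrix.neg_mul, neg_neg]

end Matrix

open Matrix

theorem corona_product_charpoly_general {n m : ℕ}
    (A : Matrix (Fin n) (Fin n) ℝ) (B : Matrix (Fin m) (Fin m) ℝ)
    (μG : Fin n → ℝ) (μH : Fin m → ℝ)
    (hμG : ∀ i, μG i = 1 ∨ μG i = -1)
    (lam : ℝ) (hinv : IsUnit (lam • (1 : Matrix (Fin m) (Fin m) ℝ) - B).det) :
    (lam • (1 : Matrix (Fin n ⊕ (Fin m × Fin n)) (Fin n ⊕ (Fin m × Fin n)) ℝ) -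
      Matrix.fromBlocks A
        (Matrix.of fun i (p : Fin m × Fin n) => if i = p.2 then μG i * μH p.1 else 0)
        (Matrix.of fun (p : Fin m × Fin n) i => if i = p.2 then μG i * μH p.1 else 0)
        (Matrix.blockDiagonal fun _ : Fin n => B)).det
    = ((lam • (1 : Matrix (Fin m) (Fin m) ℝ) - B).det) ^ n *
      ((lam - μH ⬝ᵥ ((lam • (1 : Matrix (Fin m) (Fin m) ℝ) - B)⁻¹ *ᵥ μH))
          • (1 : Matrix (Fin n) (Fin n) ℝ) - A).det := by
  have hsign : diagonal (fun i => μG i * μG i) = 1 := by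
    rw [← diagonal_one]
    congr 1
    funext i
    rcases hμG i with h | h <;> simp [h]
  change (lam • 1 - fromBlocks A (coronaJoin μG μH) (coronaJoin μG μH)ᵀ _).det = _
  rw [det_smul_one_sub_fromBlocks_blockDiagonal _ _ _ _ _ hinv,
    coronaJoin_mul_blockDiagonal_mul_transpose, hsign, Fintype.card_fin, sub_smul, sub_right_comm]

/-- Characteristic polynomial of the (ordinary) corona product of signed graphs:
`f_{G∘H}(λ) = (f_H(λ))^n · f_G(λ - χ_H(λ))`, where `χ_H` is the signed coronal
of `H`. -/
theorem corona_product_charpoly {n m : ℕ}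
    (A : Matrix (Fin n) (Fin n) ℝ) (B : Matrix (Fin m) (Fin m) ℝ)
    (μG : Fin n → ℝ) (μH : Fin m → ℝ)
    (hA : A.IsSymm) (hB : B.IsSymm)
    (hμG : ∀ i, μG i = 1 ∨ μG i = -1) (hμH : ∀ j, μH j = 1 ∨ μH j = -1)
    (lam : ℝ) (hinv : IsUnit (lam • (1 : Matrix (Fin m) (Fin m) ℝ) - B).det) :
    (lam • (1 : Matrix (Fin n ⊕ (Fin m × Fin n)) (Fin n ⊕ (Fin m × Fin n)) ℝ) -
      Matrix.fromBlocks A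
        (Matrix.of fun i (p : Fin m × Fin n) => if i = p.2 then μG i * μH p.1 else 0)
        (Matrix.of fun (p : Fin m × Fin n) i => if i = p.2 then μG i * μH p.1 else 0)
        (Matrix.blockDiagonal fun _ : Fin n => B)).det
    = ((lam • (1 : Matrix (Fin m) (Fin m) ℝ) - B).det) ^ n *
      ((lam - μH ⬝ᵥ ((lam • (1 : Matrix (Fin m) (Fin m) ℝ) - B)⁻¹ *ᵥ μH))
          • (1 : Matrix (Fin n) (Fin n) ℝ) - A).det :=
  corona_product_charpoly_general A B μG μH hμG lam hinv
end
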